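/- Fix an integer k ≥ 1. If a : ℕ → ℝ is a Stieltjes moment sequence, then for every t ∈ ℕ the t-fold iterate (L_k)^t(a) is a Stieltjes moment sequence; in particular every term of (L_k)^t(a) is nonnegative. -/

import Mathlib

/-!
Write `a n = a 0 * m n` with `m` the moment sequence of `μ`. Heine's identity
`k! * det (m (n + i + j)) = ∫ (x₁ ⋯ xₖ) ^ n * Δ(x) ^ 2 dμ^⊗k`, with `Δ` the Vandermonde
determinant, follows by expanding `Δ ^ 2` as a double sum over permutations and integrating
coordinatewise. Hence `L_k(m)` is the moment sequence of the finite measure obtained by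
pushing `Δ ^ 2 dμ^⊗k / k!` forward along `x ↦ x₁ ⋯ xₖ`, which is carried by `[0, ∞)`;
normalising it exhibits `L_k(a) = a 0 ^ k * L_k(m)` as a Stieltjes moment sequence, and one
iterates.
-/

open MeasureTheory

/-- `a` is a Stieltjes moment sequence: `a 0 ≥ 0` and there is a Borel probability
measure on `ℝ` supported on `[0, ∞)` with all moments finite such that
`a n = a 0 * ∫ x ^ n ∂μ` for all `n`. -/
def IsSM (a : ℕ → ℝ) : Prop :=
  0 ≤ a 0 ∧ ∃ μ : Measure ℝ, IsProbabilityMeasure μ ∧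
    μ (Set.Iio (0 : ℝ)) = 0 ∧
    (∀ n : ℕ, Integrable (fun x => x ^ n) μ) ∧
    (∀ n : ℕ, a n = a 0 * ∫ x, x ^ n ∂μ)

/-- The operator `L_k`: `L_k(a)(n) = det (a (n+i+j))_{0 ≤ i,j ≤ k-1}`. -/
def Lk (k : ℕ) (a : ℕ → ℝ) : ℕ → ℝ :=
  fun n => Matrix.det (Matrix.of fun i j : Fin k => a (n + (i : ℕ) + (j : ℕ)))

open Equiv Finset Matrix
open scoped NNReal ENNReal Nat

theorem ae_nonneg_iff_measure_Iio_eq_zero {μ : Measure ℝ} :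
    (∀ᵐ x ∂μ, 0 ≤ x) ↔ μ (Set.Iio 0) = 0 := by
  simp only [ae_iff, not_le]
  rfl

theorem IsSM.nonneg {a : ℕ → ℝ} (ha : IsSM a) (n : ℕ) : 0 ≤ a n := by
  obtain ⟨ha0, μ, -, hμ, -, ha⟩ := ha
  rw [ha n]
  exact mul_nonneg ha0 (integral_nonneg_of_ae
    ((ae_nonneg_iff_measure_Iio_eq_zero.2 hμ).mono fun x hx => pow_nonneg hx n))

theorem IsSM.const_mul {a : ℕ → ℝ} (ha : IsSM a) {c : ℝ} (hc : 0 ≤ c) :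
    IsSM fun n => c * a n := by
  obtain ⟨ha0, μ, hμ, hμ0, hint, ha⟩ := ha
  exact ⟨mul_nonneg hc ha0, μ, hμ, hμ0, hint, fun n => by simp only [ha n, mul_assoc]⟩

theorem isSM_moment (ν : Measure ℝ) [IsFiniteMeasure ν] (hν : ∀ᵐ y ∂ν, 0 ≤ y)
    (hint : ∀ n : ℕ, Integrable (fun y => y ^ n) ν) : IsSM fun n => ∫ y, y ^ n ∂ν := by
  rcases eq_zero_or_neZero ν with rfl | hν0
  · refine ⟨by simp, Measure.dirac 0, inferInstance, by simp, fun n => ?_, by simp⟩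
    exact integrable_dirac (by simp)
  · refine ⟨by simp, (ν Set.univ)⁻¹ • ν, inferInstance, ?_, fun n => (hint n).smul_measure
      (by simp [NeZero.ne]), fun n => ?_⟩
    · rw [Measure.smul_apply, ae_nonneg_iff_measure_Iio_eq_zero.1 hν, smul_zero]
    · have : ν.real Set.univ ≠ 0 := ENNReal.toReal_ne_zero.2
        ⟨Measure.measure_univ_ne_zero.2 (NeZero.ne ν), measure_ne_top _ _⟩
      simp only [pow_zero, integral_const, smul_eq_mul, mul_one, integral_smul_measure,
        ENNReal.toReal_inv, ← measureReal_def]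
      field_simp

theorem isSM_integral_mul_pow {X : Type*} [MeasurableSpace X] (P : Measure X) {w : X → ℝ≥0}
    (hw : Measurable w) {f : X → ℝ} (hf : Measurable f) (hf0 : ∀ᵐ x ∂P, 0 ≤ f x)
    (hint : ∀ n : ℕ, Integrable (fun x => (w x : ℝ) * f x ^ n) P) :
    IsSM fun n => ∫ x, (w x : ℝ) * f x ^ n ∂P := by
  set ν := (P.withDensity fun x => (w x : ℝ≥0∞)).map f
  have hpow (n : ℕ) : AEStronglyMeasurable (fun y : ℝ => y ^ n) ν := by fun_prop
  have hint' (n : ℕ) : Integrable (fun y => y ^ n) ν := by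
    rw [integrable_map_measure (hpow n) hf.aemeasurable,
      integrable_withDensity_iff_integrable_smul hw]
    exact hint n
  have hmoment (n : ℕ) : ∫ y, y ^ n ∂ν = ∫ x, (w x : ℝ) * f x ^ n ∂P := by
    rw [integral_map hf.aemeasurable (hpow n), integral_withDensity_eq_integral_smul hw]
    rfl
  have : IsFiniteMeasure ν := by
    simpa [integrable_const_iff] using hint' 0
  have hν : ∀ᵐ y ∂ν, 0 ≤ y :=
    (ae_map_iff hf.aemeasurable measurableSet_Ici).2
      ((withDensity_absolutelyContinuous _ _).ae_le hf0)
  simpa only [hmoment] using isSM_moment ν hν hint'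

theorem Lk_const_mul (k : ℕ) (c : ℝ) (m : ℕ → ℝ) :
    Lk k (fun n => c * m n) = fun n => c ^ k * Lk k m n := by
  funext n
  have h := det_smul (of fun i j : Fin k => m (n + i + j)) c
  rw [Fintype.card_fin] at h
  exact h

theorem Matrix.sum_sign_mul_sign_mul_prod {ι R : Type*} [Fintype ι] [DecidableEq ι]
    [CommRing R] (M : Matrix ι ι R) :
    ∑ σ : Perm ι, ∑ τ : Perm ι,
      ((Perm.sign σ : ℤ) : R) * ((Perm.sign τ : ℤ) : R) * ∏ i, M (σ i) (τ i)
      = (Fintype.card ι)! * M.det := by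
  have hcol (τ : Perm ι) :
      ∑ σ : Perm ι, ((Perm.sign σ : ℤ) : R) * ∏ i, M (σ i) (τ i)
        = ((Perm.sign τ : ℤ) : R) * M.det := by
    rw [← det_permute', det_apply']
    rfl
  have hsq (τ : Perm ι) : ((Perm.sign τ : ℤ) : R) * ((Perm.sign τ : ℤ) : R) = 1 := by
    rw [← Int.cast_mul, ← Units.val_mul, Int.units_mul_self, Units.val_one, Int.cast_one]
  calc _ = ∑ τ : Perm ι, ((Perm.sign τ : ℤ) : R) *
          ∑ σ : Perm ι, ((Perm.sign σ : ℤ) : R) * ∏ i, M (σ i) (τ i) := by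
        rw [sum_comm]
        simp only [mul_sum]
        exact sum_congr rfl fun τ _ => sum_congr rfl fun σ _ => by ring
    _ = ∑ _τ : Perm ι, M.det := by
        simp only [hcol, ← mul_assoc, hsq, one_mul]
    _ = (Fintype.card ι)! * M.det := by
        rw [sum_const, card_univ, Fintype.card_perm, nsmul_eq_mul]

theorem det_vandermonde_sq_mul_prod_pow {R : Type*} [CommRing R] {k : ℕ} (x : Fin k → R)
    (n : ℕ) :
    (vandermonde x).det ^ 2 * (∏ i, x i) ^ n
      = ∑ σ : Perm (Fin k), ∑ τ : Perm (Fin k), ((Perm.sign σ : ℤ) : R) *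
          ((Perm.sign τ : ℤ) : R) * ∏ i, x i ^ (n + σ i + τ i) := by
  have hdet : (vandermonde x).det
      = ∑ σ : Perm (Fin k), ((Perm.sign σ : ℤ) : R) * ∏ i, x i ^ (σ i : ℕ) := by
    rw [← det_transpose, det_apply']
    rfl
  simp only [pow_add, prod_mul_distrib, prod_pow]
  rw [sq, hdet, sum_mul_sum, sum_mul]
  exact sum_congr rfl fun σ _ => by rw [sum_mul]; exact sum_congr rfl fun τ _ => by ring

section Heine

variable {μ : Measure ℝ} [SigmaFinite μ]

theorem integrable_det_vandermonde_sq_mul_prod_pow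
    (hμ : ∀ n : ℕ, Integrable (fun x => x ^ n) μ) (k n : ℕ) :
    Integrable (fun x : Fin k → ℝ => (vandermonde x).det ^ 2 * (∏ i, x i) ^ n)
      (Measure.pi fun _ => μ) := by
  simp only [det_vandermonde_sq_mul_prod_pow]
  exact integrable_finsetSum _ fun σ _ => integrable_finsetSum _ fun τ _ =>
    (Integrable.fintype_prod fun i => hμ _).const_mul _

theorem integral_det_vandermonde_sq_mul_prod_pow
    (hμ : ∀ n : ℕ, Integrable (fun x => x ^ n) μ) (k n : ℕ) :
    ∫ x : Fin k → ℝ, (vandermonde x).det ^ 2 * (∏ i, x i) ^ n ∂(Measure.pi fun _ => μ)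
      = k ! * Lk k (fun j => ∫ x, x ^ j ∂μ) n := by
  have hint (σ τ : Perm (Fin k)) : Integrable (fun x : Fin k → ℝ =>
      ((Perm.sign σ : ℤ) : ℝ) * ((Perm.sign τ : ℤ) : ℝ) * ∏ i, x i ^ (n + σ i + τ i))
      (Measure.pi fun _ => μ) :=
    (Integrable.fintype_prod fun i => hμ _).const_mul _
  calc _ = ∑ σ : Perm (Fin k), ∑ τ : Perm (Fin k),
          ((Perm.sign σ : ℤ) : ℝ) * ((Perm.sign τ : ℤ) : ℝ) *
            ∏ i, ∫ x, x ^ (n + σ i + τ i) ∂μ := by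
        simp only [det_vandermonde_sq_mul_prod_pow]
        rw [integral_finsetSum _ fun σ _ => integrable_finsetSum _ fun τ _ => hint σ τ]
        refine sum_congr rfl fun σ _ => ?_
        rw [integral_finsetSum _ fun τ _ => hint σ τ]
        refine sum_congr rfl fun τ _ => ?_
        rw [integral_const_mul, integral_fintype_prod_eq_prod (fun i x => x ^ (n + σ i + τ i))]
    _ = k ! * Lk k (fun j => ∫ x, x ^ j ∂μ) n := by
        have h := sum_sign_mul_sign_mul_prod (of fun i j : Fin k => ∫ x, x ^ (n + i + j) ∂μ)
        rw [Fintype.card_fin] at h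
        exact h

end Heine

theorem isSM_Lk (k : ℕ) {a : ℕ → ℝ} (ha : IsSM a) : IsSM (Lk k a) := by
  obtain ⟨ha0, μ, hμ, hμ0, hint, ha⟩ := ha
  set P := Measure.pi fun _ : Fin k => μ
  set w : (Fin k → ℝ) → ℝ≥0 := fun x => ‖(vandermonde x).det‖₊ ^ 2
  have hw (x : Fin k → ℝ) : (w x : ℝ) = (vandermonde x).det ^ 2 := by simp [w]
  have hw_meas : Measurable w := by
    have : Continuous fun x : Fin k → ℝ => (vandermonde x).det :=
      Continuous.matrix_det (continuous_matrix fun i j => (continuous_apply i).pow _)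
    exact (this.nnnorm.pow 2).measurable
  have hprod : ∀ᵐ x ∂P, 0 ≤ ∏ i, x i := by
    have hcoord : ∀ᵐ x ∂P, ∀ i, 0 ≤ x i := ae_all_iff.2 fun i =>
      Measure.tendsto_eval_ae_ae.eventually (ae_nonneg_iff_measure_Iio_eq_zero.2 hμ0)
    exact hcoord.mono fun x hx => prod_nonneg fun i _ => hx i
  have hweight : IsSM fun n => ∫ x, (w x : ℝ) * (∏ i, x i) ^ n ∂P :=
    isSM_integral_mul_pow P hw_meas (by fun_prop) hprod fun n => by
      simpa only [hw] using integrable_det_vandermonde_sq_mul_prod_pow hint k n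
  have hLk : Lk k a
      = fun n => a 0 ^ k * ((k ! : ℝ)⁻¹ * ∫ x, (w x : ℝ) * (∏ i, x i) ^ n ∂P) := by
    calc Lk k a = Lk k fun n => a 0 * ∫ x, x ^ n ∂μ := congrArg _ (funext ha)
      _ = _ := by
        rw [Lk_const_mul]
        funext n
        simp only [hw, P, integral_det_vandermonde_sq_mul_prod_pow hint]
        field_simp
  rw [hLk]
  exact (hweight.const_mul (by positivity)).const_mul (pow_nonneg ha0 k)

theorem stmt2_general (k : ℕ) (a : ℕ → ℝ) (ha : IsSM a) :
    ∀ t : ℕ, IsSM ((Lk k)^[t] a) ∧ ∀ n : ℕ, 0 ≤ (Lk k)^[t] a n := by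
  have hiter (t : ℕ) : IsSM ((Lk k)^[t] a) := by
    induction t with
    | zero => exact ha
    | succ t ih => exact Function.iterate_succ_apply' (Lk k) t a ▸ isSM_Lk k ih
  exact fun t => ⟨hiter t, (hiter t).nonneg⟩

/-- If `a` is a Stieltjes moment sequence, then for every `t` the `t`-fold iterate
`(L_k)^[t] a` is a Stieltjes moment sequence; in particular all its terms are
nonnegative. -/
theorem stmt2 (k : ℕ) (hk : 1 ≤ k) (a : ℕ → ℝ) (ha : IsSM a) :
    ∀ t : ℕ, IsSM ((Lk k)^[t] a) ∧ ∀ n : ℕ, 0 ≤ (Lk k)^[t] a n :=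
  stmt2_general k a ha
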